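/- Let S = {s_1 < ⋯ < s_{k_1}} and T = {t_1 < ⋯ < t_{k_2}} be nonempty subsets of {1, …, n−1} and let d = gcd{s + t : s ∈ S, t ∈ T}. Then there exists a positive integer m such that every integer ℓ with −(n−1) ≤ ℓ ≤ n−1 and ℓ ≡ m·s_1 (mod d) can be written as ℓ = Σ_{j=1}^{k_1} a_j s_j − Σ_{j=1}^{k_2} b_j t_j for some nonnegative integers a_1, …, a_{k_1}, b_1, …, b_{k_2} with Σ_j a_j + Σ_j b_j = m. (That is, there exists a positive integer m with P_m ⊆ Q_m.) -/

import Mathlib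

/-!
Put `g = (s, -t)` on `ι ⊕ κ`, so that `Q_m` consists of the sums `∑ a x * g x` with `a ≥ 0`
and `∑ a x = m`. Bézout for `d = gcd (s i + t j)` gives integer coefficients `A` of total
weight `0` with `∑ A x * g x = d`, since `s i + t j = g (inl i) - g (inr j)`. Pairing `t j`
copies of `s i` with `s i` copies of `t j` gives strictly positive coefficients `c` with
`∑ c x * g x = 0` and `d ∣ ∑ c x`. For `ℓ = q * d` with `|q| ≤ n` the coefficients
`W * c + q * A` are then nonnegative once `W ≥ n * ∑ |A x|`, have weight `m = W * ∑ c x`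
(a multiple of `d`, so `P_m` is just the multiples of `d` in range) and value `ℓ`.
-/

open Finset

theorem Finset.natCast_gcd {α : Type*} (s : Finset α) (f : α → ℕ) :
    ((s.gcd f : ℕ) : ℤ) = s.gcd (fun i => (f i : ℤ)) := by
  classical
  induction s using Finset.induction with
  | empty => simp
  | insert a s ha ih =>
    rw [gcd_insert, gcd_insert, ← ih, ← Int.coe_gcd, Int.gcd_natCast_natCast]
    rfl

theorem Finset.exists_natCast_gcd_eq_sum_mul {α : Type*} (s : Finset α) (f : α → ℕ) :
    ∃ c : α → ℤ, ((s.gcd f : ℕ) : ℤ) = ∑ i ∈ s, f i * c i := by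
  simpa only [natCast_gcd] using s.gcd_eq_sum_mul (fun i => (f i : ℤ))

section NonnegRepresentation

variable {ι : Type*} [Fintype ι] (g : ι → ℤ) {A : ι → ℤ} {c : ι → ℕ}

theorem exists_natCoeffs_of_abs_mul_le (hA : ∑ i, A i = 0) (hc : ∀ i, 0 < c i)
    (hcg : ∑ i, (c i : ℤ) * g i = 0) {q : ℤ} {W : ℕ} (hW : ∀ i, |q * A i| ≤ W) :
    ∃ a : ι → ℕ, ∑ i, a i = W * ∑ i, c i ∧ ∑ i, (a i : ℤ) * g i = q * ∑ i, A i * g i := by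
  have hnonneg : ∀ i, 0 ≤ (W : ℤ) * c i + q * A i := fun i => by
    have hci : (1 : ℤ) ≤ c i := by exact_mod_cast hc i
    nlinarith [neg_abs_le (q * A i), hW i]
  refine ⟨fun i => ((W : ℤ) * c i + q * A i).toNat, ?_, ?_⟩
  · zify
    simp only [Int.toNat_of_nonneg (hnonneg _), sum_add_distrib, ← mul_sum, hA, mul_zero,
      add_zero]
  · simp only [Int.toNat_of_nonneg (hnonneg _), add_mul, sum_add_distrib, mul_assoc, ← mul_sum,
      hcg, mul_zero, zero_add]

theorem exists_natCoeffs_of_abs_le (hA : ∑ i, A i = 0) (hc : ∀ i, 0 < c i)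
    (hcg : ∑ i, (c i : ℤ) * g i = 0) (N : ℕ) :
    ∃ W : ℕ, 0 < W ∧ ∀ q : ℤ, |q| ≤ N →
      ∃ a : ι → ℕ, ∑ i, a i = W * ∑ i, c i ∧ ∑ i, (a i : ℤ) * g i = q * ∑ i, A i * g i := by
  refine ⟨N * ∑ i, (A i).natAbs + 1, Nat.succ_pos _, fun q hq => ?_⟩
  refine exists_natCoeffs_of_abs_mul_le g hA hc hcg fun i => ?_
  have hAi : |A i| ≤ ∑ i, |A i| :=
    single_le_sum (f := fun i => |A i|) (fun _ _ => abs_nonneg _) (mem_univ i)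
  push_cast
  rw [abs_mul]
  nlinarith [abs_nonneg q, abs_nonneg (A i)]

end NonnegRepresentation

section SignedFamily

variable {ι κ : Type*} [Fintype ι] [Fintype κ] (s : ι → ℕ) (t : κ → ℕ)

def signedFamily : ι ⊕ κ → ℤ := Sum.elim (fun i => s i) (fun j => -(t j : ℤ))

theorem exists_sum_eq_zero_sum_mul_signedFamily_eq_gcd :
    ∃ A : ι ⊕ κ → ℤ, ∑ x, A x = 0 ∧
      ∑ x, A x * signedFamily s t x = (univ.gcd (fun p : ι × κ => s p.1 + t p.2) : ℕ) := by
  obtain ⟨c, hc⟩ := univ.exists_natCast_gcd_eq_sum_mul (fun p : ι × κ => s p.1 + t p.2)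
  refine ⟨Sum.elim (fun i => ∑ j, c (i, j)) (fun j => -∑ i, c (i, j)), ?_, ?_⟩
  · simp [Fintype.sum_sum_type, sum_comm (γ := ι)]
  · simp only [hc, Fintype.sum_sum_type, signedFamily, Sum.elim_inl, Sum.elim_inr,
      Fintype.sum_prod_type, sum_mul, neg_mul, mul_neg, neg_neg]
    rw [sum_comm (γ := κ)]
    push_cast
    simp only [← sum_add_distrib]
    exact sum_congr rfl fun i _ => sum_congr rfl fun j _ => by ring

theorem exists_pos_sum_mul_signedFamily_eq_zero (hs : 0 < ∑ i, s i) (ht : 0 < ∑ j, t j) :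
    ∃ c : ι ⊕ κ → ℕ, (∀ x, 0 < c x) ∧ ∑ x, (c x : ℤ) * signedFamily s t x = 0 ∧
      univ.gcd (fun p : ι × κ => s p.1 + t p.2) ∣ ∑ x, c x := by
  refine ⟨Sum.elim (fun _ => ∑ j, t j) (fun _ => ∑ i, s i), ?_, ?_, ?_⟩
  · rintro (i | j) <;> assumption
  · simp only [Fintype.sum_sum_type, signedFamily, Sum.elim_inl, Sum.elim_inr]
    rw [← mul_sum, ← mul_sum, sum_neg_distrib]
    push_cast
    ring
  · have : ∑ x : ι ⊕ κ, Sum.elim (fun _ => ∑ j, t j) (fun _ => ∑ i, s i) x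
        = ∑ p : ι × κ, (s p.1 + t p.2) := by
      simp only [Fintype.sum_sum_type, Fintype.sum_prod_type, Sum.elim_inl, Sum.elim_inr,
        sum_add_distrib, sum_comm (γ := κ), add_comm]
    rw [this]
    exact dvd_sum fun p hp => gcd_dvd hp

end SignedFamily

theorem exists_P_subset_Q_general (n k₁ k₂ : ℕ)
    (s : Fin (k₁ + 1) → ℕ) (t : Fin (k₂ + 1) → ℕ)
    (hsmem : ∀ i, s i ∈ Finset.Icc 1 (n - 1)) (htmem : ∀ j, t j ∈ Finset.Icc 1 (n - 1))
    (d : ℕ)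
    (hd : d = Finset.univ.gcd (fun p : Fin (k₁ + 1) × Fin (k₂ + 1) => s p.1 + t p.2)) :
    ∃ m : ℕ, 0 < m ∧ ∀ ℓ : ℤ, -((n : ℤ) - 1) ≤ ℓ → ℓ ≤ (n : ℤ) - 1 →
      (d : ℤ) ∣ ℓ - (m : ℤ) * (s 0 : ℤ) →
      ∃ a : Fin (k₁ + 1) → ℕ, ∃ b : Fin (k₂ + 1) → ℕ,
        (∑ j, a j) + (∑ j, b j) = m ∧
        ℓ = ∑ j, (a j : ℤ) * (s j : ℤ) - ∑ j, (b j : ℤ) * (t j : ℤ) := by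
  have hs : 0 < ∑ i, s i :=
    sum_pos' (fun _ _ => Nat.zero_le _) ⟨0, mem_univ _, (mem_Icc.1 (hsmem 0)).1⟩
  have ht : 0 < ∑ j, t j :=
    sum_pos' (fun _ _ => Nat.zero_le _) ⟨0, mem_univ _, (mem_Icc.1 (htmem 0)).1⟩
  obtain ⟨A, hA, hAg⟩ := exists_sum_eq_zero_sum_mul_signedFamily_eq_gcd s t
  obtain ⟨c, hc, hcg, hdc⟩ := exists_pos_sum_mul_signedFamily_eq_zero s t hs ht
  obtain ⟨W, hW, hrepr⟩ := exists_natCoeffs_of_abs_le _ hA hc hcg n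
  rw [← hd] at hAg hdc
  have hcpos : 0 < ∑ x, c x := sum_pos (fun x _ => hc x) univ_nonempty
  refine ⟨W * ∑ x, c x, Nat.mul_pos hW hcpos, fun ℓ hℓ₁ hℓ₂ hdvd => ?_⟩
  have hdm : (d : ℤ) ∣ ((W * ∑ x, c x : ℕ) : ℤ) * s 0 :=
    (Int.natCast_dvd_natCast.2 (hdc.mul_left W)).mul_right _
  obtain ⟨q, rfl⟩ := (dvd_sub_left hdm).1 hdvd
  have hq : |q| ≤ n := by
    have hd1 : (1 : ℤ) ≤ d := by exact_mod_cast Nat.pos_of_dvd_of_pos hdc hcpos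
    calc |q| ≤ d * |q| := le_mul_of_one_le_left (abs_nonneg q) hd1
      _ = |d * q| := by rw [abs_mul, Nat.abs_cast]
      _ ≤ n := abs_le.2 ⟨by linarith, by linarith⟩
  obtain ⟨a, hsum, hval⟩ := hrepr q hq
  refine ⟨fun i => a (.inl i), fun j => a (.inr j), by simpa [Fintype.sum_sum_type] using hsum, ?_⟩
  rw [hAg, Fintype.sum_sum_type] at hval
  simp only [signedFamily, Sum.elim_inl, Sum.elim_inr, mul_neg, sum_neg_distrib] at hval
  linarith

/-- There exists a positive integer `m` such that `P_m ⊆ Q_m`: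
every `ℓ ∈ [−(n−1), n−1]` with `ℓ ≡ m·s_1 (mod d)` can be written as
`ℓ = Σ a_j s_j − Σ b_j t_j` with nonnegative `a_j, b_j` and `Σ a_j + Σ b_j = m`. -/
theorem exists_P_subset_Q (n k₁ k₂ : ℕ) (hn : 2 ≤ n)
    (s : Fin (k₁ + 1) → ℕ) (t : Fin (k₂ + 1) → ℕ)
    (hs : StrictMono s) (ht : StrictMono t)
    (hsmem : ∀ i, s i ∈ Finset.Icc 1 (n - 1)) (htmem : ∀ j, t j ∈ Finset.Icc 1 (n - 1))
    (d : ℕ)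
    (hd : d = Finset.univ.gcd (fun p : Fin (k₁ + 1) × Fin (k₂ + 1) => s p.1 + t p.2)) :
    ∃ m : ℕ, 0 < m ∧ ∀ ℓ : ℤ, -((n : ℤ) - 1) ≤ ℓ → ℓ ≤ (n : ℤ) - 1 →
      (d : ℤ) ∣ ℓ - (m : ℤ) * (s 0 : ℤ) →
      ∃ a : Fin (k₁ + 1) → ℕ, ∃ b : Fin (k₂ + 1) → ℕ,
        (∑ j, a j) + (∑ j, b j) = m ∧
        ℓ = ∑ j, (a j : ℤ) * (s j : ℤ) - ∑ j, (b j : ℤ) * (t j : ℤ) :=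
  exists_P_subset_Q_general n k₁ k₂ s t hsmem htmem d hd
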